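/- Decomposition of the identity (algebraic form of Lemma 2.11): let R be a ring and a, j ∈ R with a*j = j*a and j*(1+a) = 1 = (1+a)*j. Then for every n ≥ 1, 1 = (Σ_{k=0}^{n−1} binom(2n−1, k) a^k) * j^{2n−1} + a^n * (Σ_{k=0}^{n−1} binom(2n−1, n+k) a^k) * j^{2n−1}. (Applied with a = A and j = (1+A)^{−1} in the algebra of bounded operators on H, this gives bounded operators I_n, J_n with 1_H = I_n + Aⁿ J_n.) -/
import Mathlib


/-- algebraic form of Lemma 2.11, decomposition of the identity:
if `j` is a two-sided inverse of `1 + a` commuting with `a`, then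
`1 = I_n + aⁿ J_n` with `I_n = (Σ_{k<n} C(2n-1,k) aᵏ) j^{2n-1}` and
`J_n = (Σ_{k<n} C(2n-1,n+k) aᵏ) j^{2n-1}`. -/
theorem stmt_11 {R : Type*} [Ring R] (a j : R) (hcomm : a * j = j * a)
    (hj1 : j * (1 + a) = 1) (hj2 : (1 + a) * j = 1) (n : ℕ) (hn : 1 ≤ n) :
    (1 : R) =
      (∑ k ∈ Finset.range n, ((2 * n - 1).choose k : R) * a ^ k) * j ^ (2 * n - 1)
        + a ^ n * ((∑ k ∈ Finset.range n, ((2 * n - 1).choose (n + k) : R) * a ^ k)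
            * j ^ (2 * n - 1)) := by
  set m := 2 * n - 1 with hm
  have hm1 : m + 1 = n + n := by omega
  have hcj : Commute (1 + a) j := by
    unfold Commute SemiconjBy
    rw [mul_add, add_mul, one_mul, mul_one, hcomm]
  have h1 : (1 + a) ^ m * j ^ m = 1 := by
    rw [← hcj.mul_pow, hj2, one_pow]
  have hexp : (1 + a) ^ m = ∑ k ∈ Finset.range (m + 1), ((m.choose k : R)) * a ^ k := by
    rw [add_comm (1:R) a, (Commute.one_right a).add_pow]
    refine Finset.sum_congr rfl fun k hk => ?_
    rw [one_pow, mul_one, (Nat.cast_commute (m.choose k) (a ^ k)).eq]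
  rw [hm1, Finset.sum_range_add] at hexp
  have hsplit : (1 + a) ^ m =
      (∑ k ∈ Finset.range n, ((m.choose k : R)) * a ^ k)
        + a ^ n * ∑ k ∈ Finset.range n, ((m.choose (n + k) : R)) * a ^ k := by
    rw [hexp, Finset.mul_sum]
    congr 1
    refine Finset.sum_congr rfl fun k hk => ?_
    rw [pow_add, ← mul_assoc, (Nat.cast_commute (m.choose (n + k)) (a ^ n)).eq, mul_assoc]
  calc (1 : R) = (1 + a) ^ m * j ^ m := h1.symm
    _ = _ := by rw [hsplit, add_mul, mul_assoc]
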